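/- arXiv:1602.05464 — 3 statements merged into one kernel-verified Lean document; each statement's English description precedes it below -/
import Mathlib

section
/- Let q₁, q₂, q₃ > 0 and consider aligned configurations of the three charges on a segment of length 1/2 (so that the closed polygonal perimeter equals 1). For each choice of intermediate charge q_i (with the other two at the endpoints), the minimal Coulomb energy over such aligned configurations equals 2(q₁q₂ + q₂q₃ + q₃q₁) + 4·√(q₁q₂q₃)·√(q_i). Consequently, if q₂ < q₁ and q₂ < q₃, then the minimal energy with q₂ intermediate is strictly smaller than the minimal energies with q₁ or q₃ intermediate. -/
/-!
By Sedrakyan's (Titu's) lemma `a/x + b/y ≥ (√a + √b)²/(x + y)`, with equality at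
`x : y = √a : √b`, the energy `pq/x + qr/(L - x) + pr/L` has minimum `(√(pq) + √(qr))²/L + pr/L`
over `0 < x < L`. As `√(pq)·√(qr) = √(pqr)·√q`, this minimum increases with the intermediate
charge `q`.
-/

open Real Set

lemma isLeast_div_add_div_sub {a b L : ℝ} (ha : 0 < a) (hb : 0 < b) (hL : 0 < L) :
    IsLeast ((fun x => a / x + b / (L - x)) '' Ioo 0 L) ((√a + √b) ^ 2 / L) := by
  have hsa : 0 < √a := sqrt_pos.mpr ha
  have hsb : 0 < √b := sqrt_pos.mpr hb
  refine ⟨⟨L * √a / (√a + √b), ⟨by positivity, ?_⟩, ?_⟩, ?_⟩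
  · rw [div_lt_iff₀ (by positivity)]
    nlinarith [mul_pos hL hsb]
  · have hsub : L - L * √a / (√a + √b) = L * √b / (√a + √b) := by
      field_simp
      ring
    simp only [hsub]
    nth_rewrite 1 [← sq_sqrt ha.le]
    nth_rewrite 2 [← sq_sqrt hb.le]
    field_simp
  · rintro _ ⟨x, ⟨hx, hxL⟩, rfl⟩
    have hsedrakyan := Finset.sq_sum_div_le_sum_sq_div Finset.univ ![√a, √b] (g := ![x, L - x])
      (by simp [Fin.forall_fin_two, hx, hxL])
    simpa [Fin.sum_univ_two, sq_sqrt ha.le, sq_sqrt hb.le] using hsedrakyan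

/-- Energy of charges `p, q, r` on a segment of length `L`, with `q` at distance `x` from `p`. -/
noncomputable def alignedEnergy (L p q r x : ℝ) : ℝ := p * q / x + q * r / (L - x) + p * r / L

lemma isLeast_alignedEnergy {L p q r : ℝ} (hL : 0 < L) (hp : 0 < p) (hq : 0 < q) (hr : 0 < r) :
    IsLeast (alignedEnergy L p q r '' Ioo 0 L)
      ((p * q + q * r + r * p + 2 * √(p * q * r) * √q) / L) := by
  have hsqrt : √(p * q) * √(q * r) = √(p * q * r) * √q := by
    rw [← sqrt_mul (by positivity), ← sqrt_mul (by positivity)]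
    ring_nf
  have hmin : (p * q + q * r + r * p + 2 * √(p * q * r) * √q) / L
      = (√(p * q) + √(q * r)) ^ 2 / L + p * r / L := by
    rw [add_sq, sq_sqrt (mul_pos hp hq).le, sq_sqrt (mul_pos hq hr).le, mul_assoc 2 (√(p * q)),
      hsqrt]
    ring
  have himage : alignedEnergy L p q r '' Ioo 0 L
      = (· + p * r / L) '' ((fun x => p * q / x + q * r / (L - x)) '' Ioo 0 L) := by
    rw [image_image]
    rfl
  rw [hmin, himage]
  exact add_left_mono.map_isLeast
    (isLeast_div_add_div_sub (mul_pos hp hq) (mul_pos hq hr) hL)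

/-- For aligned configurations of three charges on a segment of length `1/2`
(perimeter-1 degenerate triangles), the minimal Coulomb energy with the `i`-th charge
intermediate equals `2(q₁q₂+q₂q₃+q₃q₁) + 4√(q₁q₂q₃)·√(qᵢ)`; hence if `q₂` is the smallest
charge, putting `q₂` in the middle gives the strictly smallest minimal energy. -/
theorem aligned_min_energy_values
    (q1 q2 q3 : ℝ) (hq1 : 0 < q1) (hq2 : 0 < q2) (hq3 : 0 < q3) :
    IsLeast ((fun x => q1 * q2 / x + q2 * q3 / (1 / 2 - x) + q1 * q3 / (1 / 2)) ''
        Set.Ioo 0 (1 / 2))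
      (2 * (q1 * q2 + q2 * q3 + q3 * q1) + 4 * Real.sqrt (q1 * q2 * q3) * Real.sqrt q2) ∧
    IsLeast ((fun x => q2 * q1 / x + q1 * q3 / (1 / 2 - x) + q2 * q3 / (1 / 2)) ''
        Set.Ioo 0 (1 / 2))
      (2 * (q1 * q2 + q2 * q3 + q3 * q1) + 4 * Real.sqrt (q1 * q2 * q3) * Real.sqrt q1) ∧
    IsLeast ((fun x => q1 * q3 / x + q3 * q2 / (1 / 2 - x) + q1 * q2 / (1 / 2)) ''
        Set.Ioo 0 (1 / 2))
      (2 * (q1 * q2 + q2 * q3 + q3 * q1) + 4 * Real.sqrt (q1 * q2 * q3) * Real.sqrt q3) ∧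
    (q2 < q1 → q2 < q3 →
      (2 * (q1 * q2 + q2 * q3 + q3 * q1) + 4 * Real.sqrt (q1 * q2 * q3) * Real.sqrt q2 <
        2 * (q1 * q2 + q2 * q3 + q3 * q1) + 4 * Real.sqrt (q1 * q2 * q3) * Real.sqrt q1) ∧
      (2 * (q1 * q2 + q2 * q3 + q3 * q1) + 4 * Real.sqrt (q1 * q2 * q3) * Real.sqrt q2 <
        2 * (q1 * q2 + q2 * q3 + q3 * q1) + 4 * Real.sqrt (q1 * q2 * q3) * Real.sqrt q3)) := by
  have hL : (0 : ℝ) < 1 / 2 := by norm_num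
  refine ⟨?_, ?_, ?_, fun h21 h23 => ⟨?_, ?_⟩⟩
  · convert isLeast_alignedEnergy hL hq1 hq2 hq3 using 1
    · rfl
    · ring
  · convert isLeast_alignedEnergy hL hq2 hq1 hq3 using 1
    · rfl
    · ring_nf
  · convert isLeast_alignedEnergy hL hq1 hq3 hq2 using 1
    · rfl
    · ring_nf
  · gcongr
  · gcongr
end

section
/- Let r₁, r₂, r₃ > 0 be pairwise distinct and q₁, q₂, q₃ > 0. Define d₁(α) = √(r₂² + r₃² − 2r₂r₃cos α), d₂(α) = √(r₃² + r₁² − 2r₃r₁cos α), d₃(α) = √(r₁² + r₂² − 2r₁r₂cos α), and E(α₁, α₂) = q₂q₃/d₁(α₁) + q₃q₁/d₂(α₂) + q₁q₂/d₃(2π − α₁ − α₂). Then (α₁, α₂) is a critical point of E (both partial derivatives vanish) if and only if, with α₃ = 2π − α₁ − α₂, sin α₁/(q₁ r₁ d₁(α₁)³) = sin α₂/(q₂ r₂ d₂(α₂)³) = sin α₃/(q₃ r₃ d₃(α₃)³). -/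
/-- Distance between two points on concentric circles of radii `a`, `b` with central
angle `α` (cosine rule). -/
noncomputable def chordDist (a b α : ℝ) : ℝ :=
  Real.sqrt (a ^ 2 + b ^ 2 - 2 * a * b * Real.cos α)

/-- Coulomb energy of three charges on concentric circles of radii `r₁, r₂, r₃`, as a
function of the central angles `(α₁, α₂)` (with `α₃ = 2π − α₁ − α₂`). -/
noncomputable def orbitalEnergy (q1 q2 q3 r1 r2 r3 : ℝ) (p : ℝ × ℝ) : ℝ :=
  q2 * q3 / chordDist r2 r3 p.1 + q3 * q1 / chordDist r3 r1 p.2 +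
    q1 * q2 / chordDist r1 r2 (2 * Real.pi - p.1 - p.2)

/-!
Each term of the energy depends on one angle only, and `d/dα (c / d(α)) = -c a b sin α / d(α)³`
for the chord `d` between circles of radii `a`, `b`. Since `∂α₃/∂α₁ = ∂α₃/∂α₂ = -1`, the two
partial derivatives of `E` are `-q₁q₂q₃r₁r₂r₃` times `s₁ - s₃` and `s₂ - s₃`, where
`sᵢ = sin αᵢ / (qᵢ rᵢ dᵢ³)`; so they vanish together exactly when `s₁ = s₂ = s₃`.
-/

open Real ContinuousLinearMap

lemma cosine_rule_pos {a b : ℝ} (hab : 0 ≤ a * b) (hne : a ≠ b) (α : ℝ) :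
    0 < a ^ 2 + b ^ 2 - 2 * a * b * cos α := by
  have : 0 < (a - b) ^ 2 := by positivity [sub_ne_zero.mpr hne]
  nlinarith [cos_le_one α]

lemma chordDist_pos {a b : ℝ} (hab : 0 ≤ a * b) (hne : a ≠ b) (α : ℝ) :
    0 < chordDist a b α :=
  sqrt_pos.mpr (cosine_rule_pos hab hne α)

lemma hasDerivAt_chordDist {a b : ℝ} (hab : 0 ≤ a * b) (hne : a ≠ b) (α : ℝ) :
    HasDerivAt (chordDist a b) (a * b * sin α / chordDist a b α) α := by
  have hinner : HasDerivAt (fun x => a ^ 2 + b ^ 2 - 2 * a * b * cos x)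
      (2 * a * b * sin α) α := by
    simpa using ((hasDerivAt_cos α).const_mul (2 * a * b)).const_sub (a ^ 2 + b ^ 2)
  refine (hinner.sqrt (cosine_rule_pos hab hne α).ne').congr_deriv ?_
  rw [chordDist]
  field_simp

lemma hasDerivAt_div_chordDist (c : ℝ) {a b : ℝ} (hab : 0 ≤ a * b) (hne : a ≠ b) (α : ℝ) :
    HasDerivAt (fun x => c / chordDist a b x)
      (-(c * a * b * sin α) / chordDist a b α ^ 3) α := by
  have hd := (chordDist_pos hab hne α).ne'
  refine ((hasDerivAt_const α c).div (hasDerivAt_chordDist hab hne α) hd).congr_deriv ?_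
  field_simp
  ring

lemma smul_fst_add_smul_snd_eq_zero {R : Type*} [CommSemiring R] [TopologicalSpace R]
    [ContinuousMul R] [ContinuousAdd R] {x y : R} :
    x • fst R R R + y • snd R R R = 0 ↔ x = 0 ∧ y = 0 := by
  constructor
  · intro h
    exact ⟨by simpa using congr($h (1, 0)), by simpa using congr($h (0, 1))⟩
  · rintro ⟨rfl, rfl⟩
    simp

variable {q1 q2 q3 r1 r2 r3 : ℝ}

lemma hasFDerivAt_orbitalEnergy (hr1 : 0 < r1) (hr2 : 0 < r2) (hr3 : 0 < r3)
    (h12 : r1 ≠ r2) (h23 : r2 ≠ r3) (h31 : r3 ≠ r1) (hq1 : q1 ≠ 0) (hq2 : q2 ≠ 0)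
    (hq3 : q3 ≠ 0) (α1 α2 : ℝ) :
    let s1 := sin α1 / (q1 * r1 * chordDist r2 r3 α1 ^ 3)
    let s2 := sin α2 / (q2 * r2 * chordDist r3 r1 α2 ^ 3)
    let s3 := sin (2 * π - α1 - α2) / (q3 * r3 * chordDist r1 r2 (2 * π - α1 - α2) ^ 3)
    HasFDerivAt (orbitalEnergy q1 q2 q3 r1 r2 r3)
      (-(q1 * q2 * q3 * r1 * r2 * r3) • ((s1 - s3) • fst ℝ ℝ ℝ + (s2 - s3) • snd ℝ ℝ ℝ))
      (α1, α2) := by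
  intro s1 s2 s3
  have H1 := (hasDerivAt_div_chordDist (q2 * q3) (mul_pos hr2 hr3).le h23 α1).comp_hasFDerivAt
    (α1, α2) (hasFDerivAt_fst (𝕜 := ℝ))
  have H2 := (hasDerivAt_div_chordDist (q3 * q1) (mul_pos hr3 hr1).le h31 α2).comp_hasFDerivAt
    (α1, α2) (hasFDerivAt_snd (𝕜 := ℝ))
  have H3 := (hasDerivAt_div_chordDist (q1 * q2) (mul_pos hr1 hr2).le h12
    (2 * π - α1 - α2)).comp_hasFDerivAt (α1, α2)
    (((hasFDerivAt_const (2 * π) _).sub (hasFDerivAt_fst (𝕜 := ℝ))).sub (hasFDerivAt_snd (𝕜 := ℝ)))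
  refine ((H1.add H2).add H3).congr_fderiv ?_
  have hd1 := (chordDist_pos (mul_pos hr2 hr3).le h23 α1).ne'
  have hd2 := (chordDist_pos (mul_pos hr3 hr1).le h31 α2).ne'
  have hd3 := (chordDist_pos (mul_pos hr1 hr2).le h12 (2 * π - α1 - α2)).ne'
  have e1 : -(q2 * q3 * r2 * r3 * sin α1) / chordDist r2 r3 α1 ^ 3 =
      -(q1 * q2 * q3 * r1 * r2 * r3) * s1 := by
    simp only [s1]
    field_simp
  have e2 : -(q3 * q1 * r3 * r1 * sin α2) / chordDist r3 r1 α2 ^ 3 =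
      -(q1 * q2 * q3 * r1 * r2 * r3) * s2 := by
    simp only [s2]
    field_simp
  have e3 : -(q1 * q2 * r1 * r2 * sin (2 * π - α1 - α2)) / chordDist r1 r2 (2 * π - α1 - α2) ^ 3 =
      -(q1 * q2 * q3 * r1 * r2 * r3) * s3 := by
    simp only [s3]
    field_simp
  rw [e1, e2, e3]
  module

/-- `(α₁, α₂)` is a critical point of the orbital Coulomb energy iff
`sin α₁/(q₁r₁d₁³) = sin α₂/(q₂r₂d₂³) = sin α₃/(q₃r₃d₃³)` with `α₃ = 2π − α₁ − α₂`. -/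
theorem orbital_critical_point_characterization
    (r1 r2 r3 q1 q2 q3 : ℝ)
    (hr1 : 0 < r1) (hr2 : 0 < r2) (hr3 : 0 < r3)
    (h12 : r1 ≠ r2) (h23 : r2 ≠ r3) (h31 : r3 ≠ r1)
    (hq1 : 0 < q1) (hq2 : 0 < q2) (hq3 : 0 < q3)
    (α1 α2 : ℝ) :
    fderiv ℝ (orbitalEnergy q1 q2 q3 r1 r2 r3) (α1, α2) = 0 ↔
      (Real.sin α1 / (q1 * r1 * chordDist r2 r3 α1 ^ 3) =
        Real.sin α2 / (q2 * r2 * chordDist r3 r1 α2 ^ 3) ∧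
       Real.sin α2 / (q2 * r2 * chordDist r3 r1 α2 ^ 3) =
        Real.sin (2 * Real.pi - α1 - α2) /
          (q3 * r3 * chordDist r1 r2 (2 * Real.pi - α1 - α2) ^ 3)) := by
  have hK : -(q1 * q2 * q3 * r1 * r2 * r3) ≠ 0 := neg_ne_zero.mpr (by positivity)
  rw [(hasFDerivAt_orbitalEnergy hr1 hr2 hr3 h12 h23 h31 hq1.ne' hq2.ne' hq3.ne' α1 α2).fderiv,
    smul_eq_zero, or_iff_right hK, smul_fst_add_smul_snd_eq_zero, sub_eq_zero, sub_eq_zero]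
  exact ⟨fun ⟨h13, h23⟩ => ⟨h13.trans h23.symm, h23⟩, fun ⟨h12, h23⟩ => ⟨h12.trans h23, h23⟩⟩
end

section
/- Let r > 0 and let p₁, p₂, p₃ be pairwise distinct points in ℝ² lying on a circle of radius r. Then 1/|p₁p₂| + 1/|p₂p₃| + 1/|p₃p₁| ≥ √3/r, with equality if and only if the triangle p₁p₂p₃ is equilateral (i.e. |p₁p₂| = |p₂p₃| = |p₃p₁| = r√3). Consequently, for three equal charges q on a common circle of radius r, the Coulomb energy E = q²(1/|p₁p₂| + 1/|p₂p₃| + 1/|p₃p₁|) attains its unique minimal value q²√3/r exactly at equilateral triangles. -/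
/-!
A triangle with sides `a, b, c` inscribed in a circle of radius `r` satisfies `abc = 4rΔ`. For
three points on a sphere in any inner product space, nonnegativity of the Gram determinant of the
radius vectors still gives `(abc)² ≤ r²·16Δ²`. Together with `3·16Δ² ≤ (ab + bc + ca)²`, which is
tight only for `a = b = c`, this yields `√3·abc ≤ r(ab + bc + ca)`, i.e.
`√3/r ≤ 1/a + 1/b + 1/c`, and equality forces `a = b = c = r√3`.
-/

open Matrix
open scoped RealInnerProductSpace

/-- Sixteen times the squared area of a triangle with sides `a, b, c` (Heron's formula). -/
def heron (a b c : ℝ) : ℝ := 2*a^2*b^2 + 2*b^2*c^2 + 2*c^2*a^2 - a^4 - b^4 - c^4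

section Heron

variable {a b c : ℝ}

theorem three_mul_heron_le_sq (ha : 0 ≤ a) (hb : 0 ≤ b) (hc : 0 ≤ c) :
    3 * heron a b c ≤ (a*b + b*c + c*a)^2 := by
  unfold heron
  nlinarith [sq_nonneg (a^2 - b^2), sq_nonneg (b^2 - c^2), sq_nonneg (c^2 - a^2),
    mul_nonneg (mul_nonneg ha hb) (sq_nonneg (a - b)),
    mul_nonneg (mul_nonneg hb hc) (sq_nonneg (b - c)),
    mul_nonneg (mul_nonneg hc ha) (sq_nonneg (c - a)),
    mul_nonneg ha (sq_nonneg ((a - b) * (a - c))),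
    mul_nonneg hb (sq_nonneg ((b - a) * (b - c))),
    mul_nonneg hc (sq_nonneg ((c - a) * (c - b)))]

theorem eq_and_eq_of_three_mul_heron_eq (ha : 0 ≤ a) (hb : 0 ≤ b) (hc : 0 ≤ c)
    (h : 3 * heron a b c = (a*b + b*c + c*a)^2) : a = b ∧ b = c := by
  unfold heron at h
  have hsq : (a^2 - b^2)^2 + (b^2 - c^2)^2 + (c^2 - a^2)^2 ≤ 0 := by
    nlinarith [mul_nonneg (mul_nonneg ha hb) (sq_nonneg (a - b)),
      mul_nonneg (mul_nonneg hb hc) (sq_nonneg (b - c)),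
      mul_nonneg (mul_nonneg hc ha) (sq_nonneg (c - a)),
      mul_nonneg ha (sq_nonneg ((a - b) * (a - c))),
      mul_nonneg hb (sq_nonneg ((b - a) * (b - c))),
      mul_nonneg hc (sq_nonneg ((c - a) * (c - b)))]
  have hab : a^2 = b^2 := by
    nlinarith [sq_nonneg (a^2 - b^2), sq_nonneg (b^2 - c^2), sq_nonneg (c^2 - a^2)]
  have hbc : b^2 = c^2 := by
    nlinarith [sq_nonneg (a^2 - b^2), sq_nonneg (b^2 - c^2), sq_nonneg (c^2 - a^2)]
  exact ⟨(sq_eq_sq₀ ha hb).mp hab, (sq_eq_sq₀ hb hc).mp hbc⟩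

variable {r : ℝ}

theorem sqrt_three_mul_le (hr : 0 ≤ r) (ha : 0 ≤ a) (hb : 0 ≤ b) (hc : 0 ≤ c)
    (h : (a*b*c)^2 ≤ r^2 * heron a b c) : √3 * (a*b*c) ≤ r * (a*b + b*c + c*a) := by
  refine (pow_le_pow_iff_left₀ (by positivity) (by positivity) two_ne_zero).mp ?_
  calc (√3 * (a*b*c))^2 = 3 * (a*b*c)^2 := by rw [mul_pow, Real.sq_sqrt zero_le_three]
    _ ≤ r^2 * (3 * heron a b c) := by linarith
    _ ≤ r^2 * (a*b + b*c + c*a)^2 := by gcongr; exact three_mul_heron_le_sq ha hb hc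
    _ = (r * (a*b + b*c + c*a))^2 := by ring

theorem eq_mul_sqrt_three_of_sqrt_three_mul_eq (hr : 0 < r) (ha : 0 < a) (hb : 0 ≤ b)
    (hc : 0 ≤ c) (h : (a*b*c)^2 ≤ r^2 * heron a b c)
    (heq : √3 * (a*b*c) = r * (a*b + b*c + c*a)) :
    a = r * √3 ∧ b = r * √3 ∧ c = r * √3 := by
  have h3 : √3 ^ 2 = 3 := Real.sq_sqrt zero_le_three
  have htight : 3 * heron a b c = (a*b + b*c + c*a)^2 := by
    refine le_antisymm (three_mul_heron_le_sq ha.le hb hc) ?_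
    have : r^2 * (a*b + b*c + c*a)^2 ≤ r^2 * (3 * heron a b c) := by
      rw [← mul_pow, ← heq]; nlinarith
    exact le_of_mul_le_mul_left this (by positivity)
  obtain ⟨rfl, rfl⟩ := eq_and_eq_of_three_mul_heron_eq ha.le hb hc htight
  have hcube : a^2 * (√3 * a) = a^2 * (√3 * (r * √3)) := by
    linear_combination heq - r * a^2 * h3
  have ha_eq := mul_left_cancel₀ (by positivity) (mul_left_cancel₀ (by positivity) hcube)
  exact ⟨ha_eq, ha_eq, ha_eq⟩

theorem one_div_add_one_div_add_one_div (ha : a ≠ 0) (hb : b ≠ 0) (hc : c ≠ 0) :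
    1/a + 1/b + 1/c = (a*b + b*c + c*a) / (a*b*c) := by
  field_simp
  ring

theorem sqrt_three_div_le_one_div_add (hr : 0 < r) (ha : 0 < a) (hb : 0 < b) (hc : 0 < c)
    (h : (a*b*c)^2 ≤ r^2 * heron a b c) : √3 / r ≤ 1/a + 1/b + 1/c := by
  rw [one_div_add_one_div_add_one_div ha.ne' hb.ne' hc.ne', div_le_div_iff₀ hr (by positivity)]
  linarith [sqrt_three_mul_le hr.le ha.le hb.le hc.le h]

theorem one_div_add_eq_sqrt_three_div_iff (hr : 0 < r) (ha : 0 < a) (hb : 0 < b) (hc : 0 < c)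
    (h : (a*b*c)^2 ≤ r^2 * heron a b c) :
    1/a + 1/b + 1/c = √3 / r ↔ a = r * √3 ∧ b = r * √3 ∧ c = r * √3 := by
  constructor
  · intro heq
    rw [one_div_add_one_div_add_one_div ha.ne' hb.ne' hc.ne',
      div_eq_div_iff (by positivity) hr.ne'] at heq
    exact eq_mul_sqrt_three_of_sqrt_three_mul_eq hr ha hb.le hc.le h (by linarith)
  · rintro ⟨rfl, rfl, rfl⟩
    have : √3 ≠ 0 := by positivity
    field_simp
    rw [Real.sq_sqrt zero_le_three]
    ring

end Heron

theorem pos_of_dist_eq_of_ne {X : Type*} [MetricSpace X] {c p₁ p₂ : X} {r : ℝ}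
    (h₁ : dist p₁ c = r) (h₂ : dist p₂ c = r) (h₁₂ : p₁ ≠ p₂) : 0 < r := by
  have := dist_triangle_right p₁ p₂ c
  linarith [dist_pos.mpr h₁₂]

section Sphere

variable {V : Type*} [NormedAddCommGroup V] [InnerProductSpace ℝ V]

theorem gram_det_three_nonneg (u v w : V) :
    0 ≤ ‖u‖^2 * ‖v‖^2 * ‖w‖^2 + 2 * ⟪u, v⟫ * ⟪v, w⟫ * ⟪u, w⟫
      - ‖u‖^2 * ⟪v, w⟫^2 - ‖v‖^2 * ⟪u, w⟫^2 - ‖w‖^2 * ⟪u, v⟫^2 := by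
  have := (posSemidef_gram ℝ ![u, v, w]).det_nonneg
  simp only [det_fin_three, gram_apply] at this
  simp [real_inner_comm] at this
  linarith

variable {c p₁ p₂ p₃ : V} {r : ℝ}

theorem inner_sub_sub_eq_of_dist_eq (h₁ : dist p₁ c = r) (h₂ : dist p₂ c = r) :
    ⟪p₁ - c, p₂ - c⟫ = r^2 - dist p₁ p₂ ^ 2 / 2 := by
  have := norm_sub_sq_real (p₁ - c) (p₂ - c)
  rw [sub_sub_sub_cancel_right, ← dist_eq_norm, ← dist_eq_norm, ← dist_eq_norm, h₁, h₂] at this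
  linarith

theorem sq_dist_mul_dist_mul_dist_le_heron (h₁ : dist p₁ c = r) (h₂ : dist p₂ c = r)
    (h₃ : dist p₃ c = r) :
    (dist p₁ p₂ * dist p₂ p₃ * dist p₃ p₁)^2
      ≤ r^2 * heron (dist p₁ p₂) (dist p₂ p₃) (dist p₃ p₁) := by
  have key := gram_det_three_nonneg (p₁ - c) (p₂ - c) (p₃ - c)
  rw [← dist_eq_norm, ← dist_eq_norm, ← dist_eq_norm, h₁, h₂, h₃,
    inner_sub_sub_eq_of_dist_eq h₁ h₂, inner_sub_sub_eq_of_dist_eq h₂ h₃,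
    inner_sub_sub_eq_of_dist_eq h₁ h₃, dist_comm p₁ p₃] at key
  unfold heron
  linear_combination 4 * key

end Sphere

theorem equal_charges_on_circle_min_general
    (r : ℝ)
    (c p1 p2 p3 : EuclideanSpace ℝ (Fin 2))
    (h1 : dist p1 c = r) (h2 : dist p2 c = r) (h3 : dist p3 c = r)
    (h12 : p1 ≠ p2) (h23 : p2 ≠ p3) (h31 : p3 ≠ p1) :
    (Real.sqrt 3 / r ≤ 1 / dist p1 p2 + 1 / dist p2 p3 + 1 / dist p3 p1) ∧
    (1 / dist p1 p2 + 1 / dist p2 p3 + 1 / dist p3 p1 = Real.sqrt 3 / r ↔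
      dist p1 p2 = r * Real.sqrt 3 ∧ dist p2 p3 = r * Real.sqrt 3 ∧
        dist p3 p1 = r * Real.sqrt 3) ∧
    (∀ q : ℝ, 0 < q →
      (q ^ 2 * Real.sqrt 3 / r ≤
        q ^ 2 * (1 / dist p1 p2 + 1 / dist p2 p3 + 1 / dist p3 p1)) ∧
      (q ^ 2 * (1 / dist p1 p2 + 1 / dist p2 p3 + 1 / dist p3 p1) =
          q ^ 2 * Real.sqrt 3 / r ↔
        dist p1 p2 = r * Real.sqrt 3 ∧ dist p2 p3 = r * Real.sqrt 3 ∧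
          dist p3 p1 = r * Real.sqrt 3)) := by
  have hr := pos_of_dist_eq_of_ne h1 h2 h12
  have hbound := sq_dist_mul_dist_mul_dist_le_heron h1 h2 h3
  have ha := dist_pos.mpr h12
  have hb := dist_pos.mpr h23
  have hc := dist_pos.mpr h31
  have hle := sqrt_three_div_le_one_div_add hr ha hb hc hbound
  have hiff := one_div_add_eq_sqrt_three_div_iff hr ha hb hc hbound
  refine ⟨hle, hiff, fun q hq => ⟨?_, ?_⟩⟩
  · rw [mul_div_assoc]
    exact mul_le_mul_of_nonneg_left hle (sq_nonneg q)
  · rw [mul_div_assoc, mul_right_inj' (by positivity)]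
    exact hiff

/-- For three pairwise distinct points on a circle of radius `r`,
`1/|p₁p₂| + 1/|p₂p₃| + 1/|p₃p₁| ≥ √3/r`, with equality iff the triangle is equilateral
(all side lengths `r√3`); hence for equal charges `q` the Coulomb energy attains its
minimal value `q²√3/r` exactly at equilateral triangles. -/
theorem equal_charges_on_circle_min
    (r : ℝ) (hr : 0 < r)
    (c p1 p2 p3 : EuclideanSpace ℝ (Fin 2))
    (h1 : dist p1 c = r) (h2 : dist p2 c = r) (h3 : dist p3 c = r)
    (h12 : p1 ≠ p2) (h23 : p2 ≠ p3) (h31 : p3 ≠ p1) :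
    (Real.sqrt 3 / r ≤ 1 / dist p1 p2 + 1 / dist p2 p3 + 1 / dist p3 p1) ∧
    (1 / dist p1 p2 + 1 / dist p2 p3 + 1 / dist p3 p1 = Real.sqrt 3 / r ↔
      dist p1 p2 = r * Real.sqrt 3 ∧ dist p2 p3 = r * Real.sqrt 3 ∧
        dist p3 p1 = r * Real.sqrt 3) ∧
    (∀ q : ℝ, 0 < q →
      (q ^ 2 * Real.sqrt 3 / r ≤
        q ^ 2 * (1 / dist p1 p2 + 1 / dist p2 p3 + 1 / dist p3 p1)) ∧
      (q ^ 2 * (1 / dist p1 p2 + 1 / dist p2 p3 + 1 / dist p3 p1) =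
          q ^ 2 * Real.sqrt 3 / r ↔
        dist p1 p2 = r * Real.sqrt 3 ∧ dist p2 p3 = r * Real.sqrt 3 ∧
          dist p3 p1 = r * Real.sqrt 3)) :=
  equal_charges_on_circle_min_general r c p1 p2 p3 h1 h2 h3 h12 h23 h31
end
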